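/- Let l > 0. Let h : (0, l) → [−1, 1] be measurable and let ψ : (0, l) × ℝ → [0, 1] be measurable with ψ = 0 a.e. on {(w₁, w₂) : w₁ ∈ (0, l), w₂ > h(w₁)}. Let t₀ ∈ (0, l) be a Lebesgue point of h in the sense that lim_{δ→0⁺} (2δ)^{-1} ∫_{t₀−δ}^{t₀+δ} |h(w₁) − h(t₀)| dw₁ = 0, and assume h(t₀) < 1. Let s₀ ∈ (h(t₀), 1]. Then for every ξ ∈ (0, (s₀ − h(t₀))/2): lim_{δ→0⁺} (2δ)^{-1} ∫_{t₀−δ}^{t₀+δ} ∫_{s₀−ξ}^{s₀+ξ} ψ(w₁, w₂) dw₂ dw₁ = 0. -/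

import Mathlib

open MeasureTheory Filter Topology

noncomputable section

/-- Lebesgue-point estimate: if `ψ ∈ [0, 1]` vanishes a.e. above the graph of `h`, `t₀` is
a Lebesgue point of `h` with `h(t₀) < 1`, and `s₀ ∈ (h(t₀), 1]`, then for
`0 < ξ < (s₀ − h(t₀))/2` the averages
`(2δ)⁻¹ ∫_{t₀−δ}^{t₀+δ} ∫_{s₀−ξ}^{s₀+ξ} ψ` tend to `0` as `δ → 0⁺`. -/
theorem lebesgue_point_average_zero (l : ℝ) (hl : 0 < l)
    (h : ℝ → ℝ) (hmeas : Measurable h)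
    (hmem : ∀ t ∈ Set.Ioo (0 : ℝ) l, h t ∈ Set.Icc (-1 : ℝ) 1)
    (ψ : ℝ × ℝ → ℝ) (hψmeas : Measurable ψ)
    (hψmem : ∀ w : ℝ × ℝ, w.1 ∈ Set.Ioo (0 : ℝ) l → ψ w ∈ Set.Icc (0 : ℝ) 1)
    (hzero : ∀ᵐ w : ℝ × ℝ ∂volume, (w.1 ∈ Set.Ioo (0 : ℝ) l ∧ h w.1 < w.2) → ψ w = 0)
    (t0 : ℝ) (ht0 : t0 ∈ Set.Ioo (0 : ℝ) l)
    (hleb : Tendsto (fun δ => (2 * δ)⁻¹ * ∫ t in Set.Ioo (t0 - δ) (t0 + δ), |h t - h t0|)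
      (𝓝[>] 0) (𝓝 0))
    (hht0 : h t0 < 1) (s0 : ℝ) (hs0 : s0 ∈ Set.Ioc (h t0) 1) :
    ∀ ξ ∈ Set.Ioo (0 : ℝ) ((s0 - h t0) / 2),
      Tendsto (fun δ => (2 * δ)⁻¹ *
          ∫ w in Set.Ioo (t0 - δ) (t0 + δ) ×ˢ Set.Ioo (s0 - ξ) (s0 + ξ), ψ w)
        (𝓝[>] 0) (𝓝 0) := by
  intro ξ hξ
  obtain ⟨hξ0, hξhalf⟩ := hξ
  set ε : ℝ := s0 - ξ - h t0 with hε_def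
  have hεpos : 0 < ε := by
    have : ξ < s0 - h t0 := lt_of_lt_of_le hξhalf (by linarith [hs0.1])
    simp only [hε_def]; linarith
  set C : ℝ := ε⁻¹ * (2 * ξ) with hC_def
  have hCpos : 0 ≤ C := by positivity
  -- key estimate for small δ
  have key : ∀ δ : ℝ, δ ∈ Set.Ioo (0 : ℝ) (min t0 (l - t0)) →
      (0 ≤ (2 * δ)⁻¹ * ∫ w in Set.Ioo (t0 - δ) (t0 + δ) ×ˢ Set.Ioo (s0 - ξ) (s0 + ξ), ψ w) ∧
      (2 * δ)⁻¹ * (∫ w in Set.Ioo (t0 - δ) (t0 + δ) ×ˢ Set.Ioo (s0 - ξ) (s0 + ξ), ψ w) ≤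
        C * ((2 * δ)⁻¹ * ∫ t in Set.Ioo (t0 - δ) (t0 + δ), |h t - h t0|) := by
    intro δ hδ
    obtain ⟨hδ0, hδlt⟩ := hδ
    set A := Set.Ioo (t0 - δ) (t0 + δ) with hA_def
    set B := Set.Ioo (s0 - ξ) (s0 + ξ) with hB_def
    have hAsub : A ⊆ Set.Ioo (0 : ℝ) l := by
      intro x hx
      have h1 : δ ≤ t0 := le_of_lt (lt_of_lt_of_le hδlt (min_le_left _ _))
      have h2 : δ ≤ l - t0 := le_of_lt (lt_of_lt_of_le hδlt (min_le_right _ _))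
      exact ⟨by linarith [hx.1], by linarith [hx.2]⟩
    have hAmeas : MeasurableSet A := measurableSet_Ioo
    have hBmeas : MeasurableSet B := measurableSet_Ioo
    have hABmeas : MeasurableSet (A ×ˢ B) := hAmeas.prod hBmeas
    have hvol : volume (A ×ˢ B) < ⊤ := by
      exact ((Bornology.IsBounded.prod (Metric.isBounded_Ioo _ _)
        (Metric.isBounded_Ioo _ _))).measure_lt_top
    -- integrability
    have hψint : IntegrableOn ψ (A ×ˢ B) volume := by
      apply Measure.integrableOn_of_bounded hvol.ne hψmeas.aestronglyMeasurable (M := 1)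
      filter_upwards [ae_restrict_mem hABmeas] with w hw
      have := hψmem w (hAsub hw.1)
      rw [Real.norm_eq_abs, abs_le]
      exact ⟨by linarith [this.1], this.2⟩
    have hgmeas : Measurable (fun w : ℝ × ℝ => |h w.1 - h t0|) :=
      ((hmeas.comp measurable_fst).sub measurable_const).abs
    have hgint : IntegrableOn (fun w : ℝ × ℝ => |h w.1 - h t0|) (A ×ˢ B) volume := by
      apply Measure.integrableOn_of_bounded hvol.ne hgmeas.aestronglyMeasurable (M := 2)
      filter_upwards [ae_restrict_mem hABmeas] with w hw
      have h1 := hmem w.1 (hAsub hw.1)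
      have h2 := hmem t0 ht0
      rw [Real.norm_eq_abs, abs_abs, abs_le]
      constructor <;> [linarith [h1.1, h2.2]; linarith [h1.2, h2.1]]
    -- pointwise a.e. bound
    have hae : ∀ᵐ w ∂(volume.restrict (A ×ˢ B)), ψ w ≤ ε⁻¹ * |h w.1 - h t0| := by
      filter_upwards [ae_restrict_mem hABmeas, ae_restrict_of_ae hzero] with w hw hz
      have hw1 : w.1 ∈ Set.Ioo (0 : ℝ) l := hAsub hw.1
      rcases lt_or_ge (h w.1) w.2 with hlt | hle
      · rw [hz ⟨hw1, hlt⟩]; positivity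
      · have : ε < h w.1 - h t0 := by
          have := hw.2.1
          simp only [hε_def]; linarith
        have habs : ε ≤ |h w.1 - h t0| := le_trans this.le (le_abs_self _)
        calc ψ w ≤ 1 := (hψmem w hw1).2
          _ ≤ ε⁻¹ * |h w.1 - h t0| := by
            rw [inv_mul_eq_div, le_div_iff₀ hεpos, one_mul]
            exact habs
    -- integral comparison
    have hint_le : (∫ w in A ×ˢ B, ψ w) ≤ ∫ w in A ×ˢ B, ε⁻¹ * |h w.1 - h t0| :=
      integral_mono_ae hψint (hgint.const_mul _) hae
    -- compute RHS via Fubini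
    have hrhs : (∫ w in A ×ˢ B, ε⁻¹ * |h w.1 - h t0|) =
        C * ∫ t in A, |h t - h t0| := by
      rw [integral_const_mul]
      have : (∫ w in A ×ˢ B, |h w.1 - h t0|) = (2 * ξ) * ∫ t in A, |h t - h t0| := by
        rw [Measure.volume_eq_prod] at hgint ⊢
        rw [setIntegral_prod _ hgint]
        simp only [integral_const, Measure.restrict_apply MeasurableSet.univ, Set.univ_inter,
          smul_eq_mul]
        rw [← integral_const_mul]
        congr 1
        ext t
        rw [measureReal_def, Measure.restrict_apply MeasurableSet.univ, Set.univ_inter, Real.volume_Ioo]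
        rw [ENNReal.toReal_ofReal (by linarith : (0:ℝ) ≤ s0 + ξ - (s0 - ξ))]
        ring
      rw [this, hC_def]; ring
    have hnonneg : 0 ≤ ∫ w in A ×ˢ B, ψ w := by
      apply setIntegral_nonneg hABmeas
      intro w hw
      exact (hψmem w (hAsub hw.1)).1
    have hinv : 0 ≤ (2 * δ)⁻¹ := by positivity
    refine ⟨mul_nonneg hinv hnonneg, ?_⟩
    calc (2 * δ)⁻¹ * (∫ w in A ×ˢ B, ψ w)
        ≤ (2 * δ)⁻¹ * (C * ∫ t in A, |h t - h t0|) := by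
          apply mul_le_mul_of_nonneg_left _ hinv
          rw [← hrhs]; exact hint_le
      _ = C * ((2 * δ)⁻¹ * ∫ t in A, |h t - h t0|) := by ring
  -- squeeze
  have hmem_filter : Set.Ioo (0 : ℝ) (min t0 (l - t0)) ∈ 𝓝[>] (0 : ℝ) := by
    apply Ioo_mem_nhdsGT_of_mem
    exact ⟨le_refl 0, lt_min ht0.1 (by linarith [ht0.2])⟩
  apply squeeze_zero'
  · filter_upwards [hmem_filter] with δ hδ using (key δ hδ).1
  · filter_upwards [hmem_filter] with δ hδ using (key δ hδ).2
  · simpa using hleb.const_mul C
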